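/- arXiv:math/0602140 — 6 statements merged into one kernel-verified Lean document; each statement's English description precedes it below -/
import Mathlib

section
/- The Thomas division is continuous: given a set U of commutative monomials and a sequence (u_1,...,u_m) from U such that for each i < m, u_{i+1} Thomas-involutively divides u_i·x_{j_i} for some variable x_{j_i} that is Thomas-nonmultiplicative for u_i over U, all the monomials u_1,...,u_m are pairwise distinct. In fact u_{i+1} = u_i·x_{j_i} for each i. -/
/-- Commutative monomials over `R[x_1, …, x_n]` are identified with their
multidegrees `Fin n → ℕ`.  For a finite set `U` of monomials, the Thomas
division declares the variable `x i` multiplicative for `u ∈ U` iff the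
exponent of `x i` in `u` is maximal among the elements of `U`. -/
def ThomasMult {n : ℕ} (U : Finset (Fin n → ℕ)) (u : Fin n → ℕ) (i : Fin n) : Prop :=
  ∀ v ∈ U, v i ≤ u i

/-- `u` Thomas-involutively divides `w` over `U`:  `u` divides `w` and every
variable occurring in the quotient `w/u` is Thomas-multiplicative for `u`. -/
def ThomasInvDiv {n : ℕ} (U : Finset (Fin n → ℕ)) (u w : Fin n → ℕ) : Prop :=
  (∀ t, u t ≤ w t) ∧ ∀ t, u t < w t → ThomasMult U u t

/-- **The Thomas division is continuous.**
Given a finite set `U` of commutative monomials and a sequence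
`u 0, …, u (m-1)` from `U` such that for each `i` with `i + 1 < m`,
`u (i+1)` Thomas-involutively divides the prolongation `u i · x (j i)` by a
variable `x (j i)` that is Thomas-nonmultiplicative for `u i` over `U`, all the
monomials `u 0, …, u (m-1)` are pairwise distinct.  In fact
`u (i+1) = u i · x (j i)` for each `i`. -/
theorem thomas_continuous {n : ℕ} (m : ℕ) (U : Finset (Fin n → ℕ))
    (u : ℕ → (Fin n → ℕ)) (j : ℕ → Fin n)
    (hU : ∀ i, i < m → u i ∈ U)
    (hstep : ∀ i, i + 1 < m →
      ¬ ThomasMult U (u i) (j i) ∧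
      ThomasInvDiv U (u (i + 1)) (fun t => u i t + if t = j i then 1 else 0)) :
    (∀ i i', i < m → i' < m → i ≠ i' → u i ≠ u i') ∧
    (∀ i, i + 1 < m → u (i + 1) = fun t => u i t + if t = j i then 1 else 0) := by
  have heq : ∀ i, i + 1 < m → u (i + 1) = fun t => u i t + if t = j i then 1 else 0 := by
    intro i hi
    obtain ⟨hnm, hle, hmul⟩ := hstep i hi
    funext t
    by_contra hne
    have hlt : u (i+1) t < u i t + if t = j i then 1 else 0 :=
      lt_of_le_of_ne (hle t) hne
    have hM := hmul t hlt
    by_cases ht : t = j i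
    · subst ht
      simp only [if_pos rfl] at hlt
      exact hnm (fun v hv => le_trans (hM v hv) (Nat.lt_succ_iff.mp hlt))
    · simp only [if_neg ht, add_zero] at hlt
      exact absurd (hM (u i) (hU i (by omega))) (not_le.mpr hlt)
  refine ⟨?_, heq⟩
  have hS : ∀ i, i + 1 < m → (∑ t, u (i+1) t) = (∑ t, u i t) + 1 := by
    intro i hi
    rw [heq i hi]
    simp [Finset.sum_add_distrib]
  have hadd : ∀ i d, i + d < m → (∑ t, u (i+d) t) = (∑ t, u i t) + d := by
    intro i d
    induction d with
    | zero => simp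
    | succ d ih =>
      intro h
      have h2 := hS (i+d) (by omega)
      rw [show i + (d+1) = (i+d)+1 by ring, h2, ih (by omega)]; ring
  have main : ∀ i i', i < i' → i' < m → u i ≠ u i' := by
    intro i i' hlt hm' hequ
    have := hadd i (i'-i) (by omega)
    rw [show i + (i'-i) = i' by omega, hequ] at this
    omega
  intro i i' hi hi' hne
  rcases lt_or_gt_of_ne hne with h | h
  · exact main i i' h hi'
  · exact (main i' i h hi).symm
end

section
/- The Pommaret division on commutative monomials is continuous: for any set U of monomials and any sequence (u_1,...,u_m) from U such that each u_{i+1} Pommaret-involutively divides u_i·x_{j_i} for some variable x_{j_i} nonmultiplicative for u_i, the monomials u_1,...,u_m are pairwise distinct. -/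
/-- Commutative monomials over `R[x_1, …, x_n]` are identified with their
multidegrees `Fin n → ℕ`, the variables being ordered `x 0 > x 1 > ⋯`.
The (global) Pommaret division declares the variable `x t` multiplicative for a
monomial `u` iff every earlier variable has exponent `0` in `u` (equivalently,
`x 1, …, x i` are multiplicative, where `i` is minimal with `e^i > 0`, and all
variables are multiplicative for `u = 1`). -/
def PommaretMult {n : ℕ} (u : Fin n → ℕ) (t : Fin n) : Prop :=
  ∀ s, s < t → u s = 0

/-- `u` Pommaret-involutively divides `w`:  `u` divides `w` and every variable
occurring in the quotient `w/u` is Pommaret-multiplicative for `u`. -/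
def PommaretInvDiv {n : ℕ} (u w : Fin n → ℕ) : Prop :=
  (∀ t, u t ≤ w t) ∧ ∀ t, u t < w t → PommaretMult u t

/-- **The Pommaret division is continuous.**
For any set `U` of monomials and any sequence `u 0, …, u (m-1)` from `U` such
that each `u (i+1)` Pommaret-involutively divides the prolongation
`u i · x (j i)` by a variable `x (j i)` that is Pommaret-nonmultiplicative for
`u i`, the monomials `u 0, …, u (m-1)` are pairwise distinct. -/
theorem pommaret_continuous {n : ℕ} (m : ℕ) (U : Set (Fin n → ℕ))
    (u : ℕ → (Fin n → ℕ)) (j : ℕ → Fin n)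
    (hU : ∀ i, i < m → u i ∈ U)
    (hstep : ∀ i, i + 1 < m →
      ¬ PommaretMult (u i) (j i) ∧
      PommaretInvDiv (u (i + 1)) (fun t => u i t + if t = j i then 1 else 0)) :
    ∀ i i', i < m → i' < m → i ≠ i' → u i ≠ u i' := by
  suffices H : ∀ a b, a < b → b < m → u a ≠ u b by
    intro i i' hi hi' hne heq
    rcases hne.lt_or_gt with h | h
    · exact H i i' h hi' heq
    · exact H i' i h hi heq.symm
  intro a b hab hbm heq
  have ha1 : a + 1 < m := by omega
  obtain ⟨s0, hs0j, hs0⟩ : ∃ s, s < j a ∧ u a s ≠ 0 := by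
    have h := (hstep a ha1).1
    unfold PommaretMult at h
    push_neg at h
    exact h
  set S : Finset (Fin n) := Finset.univ.filter (fun t => u a t ≠ 0) with hS
  have hSne : S.Nonempty := ⟨s0, by simp [hS, hs0]⟩
  set C : Fin n := S.min' hSne with hC
  have hCmem : u a C ≠ 0 := by
    have := S.min'_mem hSne
    simpa [hS] using this
  have hCmin : ∀ s, s < C → u a s = 0 := by
    intro s hs
    by_contra h
    exact absurd (S.min'_le s (by simp [hS, h])) (not_le.mpr hs)
  set T : ℕ → ℕ := fun i => ∑ t ∈ Finset.univ.filter (fun t => C < t), u i t with hT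
  have key : ∀ k, a + k ≤ b →
      (∀ s, s < C → u (a + k) s = 0) ∧ (u (a + k) C = 0 ∨ T a + k ≤ T (a + k)) := by
    intro k
    induction k with
    | zero => exact fun _ => ⟨hCmin, Or.inr le_rfl⟩
    | succ k ih =>
      intro hk
      obtain ⟨H1, H2⟩ := ih (by omega)
      set i := a + k with hi
      obtain ⟨hnm, hle, hmu⟩ := hstep i (by omega)
      -- C < j i
      have hCj : C < j i := by
        unfold PommaretMult at hnm
        push_neg at hnm
        obtain ⟨s, hsj, hsne⟩ := hnm
        have hCs : ¬ s < C := fun h => hsne (H1 s h)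
        exact lt_of_le_of_lt (not_lt.mp hCs) hsj
      have hik : a + (k + 1) = i + 1 := by omega
      rw [hik]
      have H1' : ∀ s, s < C → u (i + 1) s = 0 := by
        intro s hs
        have h1 := hle s
        have hne : s ≠ j i := fun h => absurd (h ▸ hs) (not_lt.mpr hCj.le)
        simp only [hne, if_false, H1 s hs] at h1
        omega
      refine ⟨H1', ?_⟩
      by_cases hall : ∀ t, C < t → u (i + 1) t = u i t + (if t = j i then 1 else 0)
      · rcases H2 with h0 | hT2
        · left
          have h1 := hle C
          have hne : C ≠ j i := ne_of_lt hCj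
          simp only [hne, if_false, h0] at h1
          omega
        · right
          have hsum : T (i + 1) = T i + 1 := by
            simp only [hT]
            rw [Finset.sum_congr rfl (fun t ht => hall t (by simpa using ht)),
              Finset.sum_add_distrib,
              Finset.sum_ite_eq' (Finset.univ.filter (fun t => C < t)) (j i) (fun _ => 1)]
            simp [hCj]
          omega
      · left
        push_neg at hall
        obtain ⟨t, hCt, htne⟩ := hall
        have hlt : u (i + 1) t < u i t + (if t = j i then 1 else 0) :=
          lt_of_le_of_ne (hle t) htne
        exact hmu t hlt C hCt
  obtain ⟨-, H2⟩ := key (b - a) (by omega)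
  have hba : a + (b - a) = b := by omega
  rw [hba] at H2
  rcases H2 with h0 | hT2
  · exact hCmem (heq ▸ h0)
  · have : T b = T a := by rw [hT]; simp only; exact Finset.sum_congr rfl fun t _ => by rw [← heq]
    omega
end

section
/- The Janet division is stable: if u and v are distinct commutative monomials with u | v, and j is the greatest index such that the exponent of x_j in u is strictly less than in v, then x_j is Janet-nonmultiplicative for u over the set {u, v}, and hence u does not Janet-involutively divide v over {u, v}. -/
/-- Commutative monomials over `R[x_1, …, x_n]` are identified with their
multidegrees `Fin n → ℕ`.  For a set `U` of monomials, the Janet division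
declares `x i` multiplicative for `u ∈ U` iff the exponent of `x i` in `u` is
maximal among those elements of `U` agreeing with `u` in all later variables
(for the last variable the side condition is vacuous). -/
def JanetMult {n : ℕ} (U : Set (Fin n → ℕ)) (u : Fin n → ℕ) (i : Fin n) : Prop :=
  ∀ w ∈ U, (∀ l, i < l → w l = u l) → w i ≤ u i

/-- `u` Janet-involutively divides `w` over `U`: `u | w` and every variable
occurring in the quotient `w/u` is Janet-multiplicative for `u` over `U`. -/
def JanetInvDiv {n : ℕ} (U : Set (Fin n → ℕ)) (u w : Fin n → ℕ) : Prop :=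
  (∀ t, u t ≤ w t) ∧ ∀ t, u t < w t → JanetMult U u t

/-- **The Janet division is stable.**
If `u` and `v` are distinct monomials with `u | v`, and `j` is the greatest
index such that the exponent of `x j` in `u` is strictly less than in `v`,
then `x j` is Janet-nonmultiplicative for `u` over `{u, v}`, and hence `u`
does not Janet-involutively divide `v` over `{u, v}`. -/
theorem janet_stable {n : ℕ} (u v : Fin n → ℕ) (j : Fin n) (hne : u ≠ v)
    (hdvd : ∀ t, u t ≤ v t)
    (hj : u j < v j) (hjmax : ∀ l, j < l → ¬ u l < v l) :
    ¬ JanetMult ({u, v} : Set (Fin n → ℕ)) u j ∧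
    ¬ JanetInvDiv ({u, v} : Set (Fin n → ℕ)) u v := by
  have hnm : ¬ JanetMult ({u, v} : Set (Fin n → ℕ)) u j := by
    intro h
    have := h v (Or.inr rfl) (fun l hl => le_antisymm (le_of_not_gt (hjmax l hl)) (hdvd l))
    omega
  exact ⟨hnm, fun h => hnm (h.2 j hj)⟩
end

section
/- Buchberger's first criterion: if f and g are commutative polynomials whose leading monomials are coprime (lcm(LM(f), LM(g)) = LM(f)·LM(g)) with respect to an admissible monomial ordering, then the S-polynomial S-pol(f,g) reduces to zero modulo the set {f, g}. -/
open scoped MonomialOrder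

/-- A term of a commutative polynomial: a coefficient times a monomial. -/
def IsTerm {k : Type*} [Field k] {n : ℕ} (p : MvPolynomial (Fin n) k) : Prop :=
  ∃ (a : Fin n →₀ ℕ) (c : k), p = MvPolynomial.monomial a c

private lemma sum_range_getD {M α : Type*} [AddCommMonoid M] (L : List α) (d : α) (F : α → M) :
    ∑ i ∈ Finset.range L.length, F (L.getD i d) = (L.map F).sum := by
  induction L with
  | nil => simp
  | cons a L ih =>
    rw [List.length_cons, Finset.sum_range_succ']
    simp only [List.getD_cons_succ, List.getD_cons_zero, List.map_cons, List.sum_cons, ih]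
    abel

/-- **Buchberger's First Criterion.**
Let `m` be an admissible monomial ordering on `k[x_1, …, x_n]` (`k` a field),
and let `lm` compute leading monomials with respect to `m` (the hypothesis
`hlm` says that `lm p` is the `m`-greatest monomial of the support of any
nonzero `p`).  If the leading monomials of `f` and `g` are disjoint, i.e.
`lcm(LM f, LM g) = LM f · LM g` (for multidegrees: `lm f ⊔ lm g = lm f + lm g`),
then the S-polynomial
`S-pol(f,g) = (lcm/LT f)·f − (lcm/LT g)·g` reduces to zero using `{f, g}`:
it has a standard representation `∑ tᵢ·qᵢ` with each `tᵢ` a term, each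
`qᵢ ∈ {f, g}`, and every monomial of each summand `tᵢ·qᵢ` strictly below
`lcm(LM f, LM g)` in the ordering. -/
theorem buchberger_first_criterion {k : Type*} [Field k] {n : ℕ}
    (m : MonomialOrder (Fin n))
    (lm : MvPolynomial (Fin n) k → (Fin n →₀ ℕ))
    (hlm : ∀ p : MvPolynomial (Fin n) k, p ≠ 0 →
      lm p ∈ p.support ∧ ∀ a ∈ p.support, a ≼[m] lm p)
    (f g : MvPolynomial (Fin n) k) (hf : f ≠ 0) (hg : g ≠ 0)
    (hdisjoint : lm f ⊔ lm g = lm f + lm g) :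
    ∃ (N : ℕ) (t q : ℕ → MvPolynomial (Fin n) k),
      (∀ i, i < N → IsTerm (t i)) ∧
      (∀ i, i < N → q i = f ∨ q i = g) ∧
      (MvPolynomial.monomial (lm f ⊔ lm g - lm f) (1 / MvPolynomial.coeff (lm f) f) * f
        - MvPolynomial.monomial (lm f ⊔ lm g - lm g) (1 / MvPolynomial.coeff (lm g) g) * g
        = ∑ i ∈ Finset.range N, t i * q i) ∧
      (∀ i, i < N → ∀ a ∈ (t i * q i).support, a ≺[m] (lm f ⊔ lm g)) := by
  classical
  open MvPolynomial in
  set cf := MvPolynomial.coeff (lm f) f with hcfdef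
  set cg := MvPolynomial.coeff (lm g) g with hcgdef
  have hcf : cf ≠ 0 := MvPolynomial.mem_support_iff.mp (hlm f hf).1
  have hcg : cg ≠ 0 := MvPolynomial.mem_support_iff.mp (hlm g hg).1
  set f' := f - MvPolynomial.monomial (lm f) cf with hf'def
  set g' := g - MvPolynomial.monomial (lm g) cg with hg'def
  set e : k := cf⁻¹ * cg⁻¹ with hedef
  -- support facts
  have hsubf : ∀ a ∈ f'.support, a ≺[m] lm f := by
    intro a ha
    rw [MvPolynomial.mem_support_iff, hf'def, MvPolynomial.coeff_sub,
      MvPolynomial.coeff_monomial] at ha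
    have hane : a ≠ lm f := by
      intro h; apply ha; rw [if_pos h.symm, hcfdef, h, sub_self]
    have hamem : a ∈ f.support := by
      rw [MvPolynomial.mem_support_iff]
      intro h
      apply ha
      rw [h, zero_sub, neg_eq_zero]
      split_ifs with h'
      · rw [hcfdef, h']; exact h
      · rfl
    exact lt_of_le_of_ne ((hlm f hf).2 a hamem)
      (fun h => hane (m.toSyn.injective h))
  have hsubg : ∀ a ∈ g'.support, a ≺[m] lm g := by
    intro a ha
    rw [MvPolynomial.mem_support_iff, hg'def, MvPolynomial.coeff_sub,
      MvPolynomial.coeff_monomial] at ha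
    have hane : a ≠ lm g := by
      intro h; apply ha; rw [if_pos h.symm, hcgdef, h, sub_self]
    have hamem : a ∈ g.support := by
      rw [MvPolynomial.mem_support_iff]
      intro h
      apply ha
      rw [h, zero_sub, neg_eq_zero]
      split_ifs with h'
      · rw [hcgdef, h']; exact h
      · rfl
    exact lt_of_le_of_ne ((hlm g hg).2 a hamem)
      (fun h => hane (m.toSyn.injective h))
  -- the list of (term, factor) pairs
  set L : List (MvPolynomial (Fin n) k × MvPolynomial (Fin n) k) :=
    (f'.support.toList.map fun a => (MvPolynomial.monomial a (e * f'.coeff a), g)) ++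
    (g'.support.toList.map fun b => (MvPolynomial.monomial b (-(e * g'.coeff b)), f)) with hLdef
  -- every member of L is good
  have hmem : ∀ p ∈ L, IsTerm p.1 ∧ (p.2 = f ∨ p.2 = g) ∧
      ∀ a ∈ (p.1 * p.2).support, a ≺[m] (lm f ⊔ lm g) := by
    intro p hp
    rw [hLdef, List.mem_append] at hp
    rcases hp with hp | hp <;> rw [List.mem_map] at hp
    · obtain ⟨a, ha, rfl⟩ := hp
      rw [Finset.mem_toList] at ha
      refine ⟨⟨a, _, rfl⟩, Or.inr rfl, ?_⟩
      intro b hb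
      have := MvPolynomial.support_mul _ _ hb
      rw [Finset.mem_add] at this
      obtain ⟨u, hu, v, hv, rfl⟩ := this
      have hu' : u = a := by
        have := MvPolynomial.support_monomial_subset hu
        simpa using this
      subst hu'
      have h1 : u ≺[m] lm f := hsubf u ha
      have h2 : v ≼[m] lm g := (hlm g hg).2 v hv
      rw [hdisjoint]
      calc m.toSyn (u + v) = m.toSyn u + m.toSyn v := by rw [map_add]
        _ < m.toSyn (lm f) + m.toSyn (lm g) := add_lt_add_of_lt_of_le h1 h2
        _ = m.toSyn (lm f + lm g) := (map_add _ _ _).symm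
    · obtain ⟨a, ha, rfl⟩ := hp
      rw [Finset.mem_toList] at ha
      refine ⟨⟨a, _, rfl⟩, Or.inl rfl, ?_⟩
      intro b hb
      have := MvPolynomial.support_mul _ _ hb
      rw [Finset.mem_add] at this
      obtain ⟨u, hu, v, hv, rfl⟩ := this
      have hu' : u = a := by
        have := MvPolynomial.support_monomial_subset hu
        simpa using this
      subst hu'
      have h1 : u ≺[m] lm g := hsubg u ha
      have h2 : v ≼[m] lm f := (hlm f hf).2 v hv
      rw [hdisjoint]
      calc m.toSyn (u + v) = m.toSyn u + m.toSyn v := by rw [map_add]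
        _ < m.toSyn (lm g) + m.toSyn (lm f) := add_lt_add_of_lt_of_le h1 h2
        _ = m.toSyn (lm f + lm g) := by rw [← map_add, add_comm]
  refine ⟨L.length, fun i => (L.getD i (0,0)).1, fun i => (L.getD i (0,0)).2, ?_, ?_, ?_, ?_⟩
  · intro i hi
    exact (hmem _ (List.getD_eq_getElem L (0,0) hi ▸ List.getElem_mem hi)).1
  · intro i hi
    exact (hmem _ (List.getD_eq_getElem L (0,0) hi ▸ List.getElem_mem hi)).2.1
  · -- the sum identity
    rw [sum_range_getD L (0,0) (fun p => p.1 * p.2)]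
    have hsl : lm f ⊔ lm g - lm f = lm g := by rw [hdisjoint]; exact add_tsub_cancel_left _ _
    have hsr : lm f ⊔ lm g - lm g = lm f := by rw [hdisjoint]; exact add_tsub_cancel_right _ _
    rw [hsl, hsr, hLdef, List.map_append, List.map_map, List.map_map, List.sum_append]
    have hA : ((f'.support.toList.map ((fun p : MvPolynomial (Fin n) k × MvPolynomial (Fin n) k => p.1 * p.2) ∘
        fun a => (MvPolynomial.monomial a (e * f'.coeff a), g)))).sum
        = MvPolynomial.C e * f' * g := by
      have : ∀ a, (MvPolynomial.monomial a (e * f'.coeff a) : MvPolynomial (Fin n) k) * g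
          = MvPolynomial.C e * (MvPolynomial.monomial a (f'.coeff a) * g) := by
        intro a; rw [← mul_assoc, MvPolynomial.C_mul_monomial]
      simp only [Function.comp_def, this]
      rw [List.sum_map_mul_left, Finset.sum_map_toList]
      rw [← Finset.sum_mul, MvPolynomial.support_sum_monomial_coeff, mul_assoc]
    have hB : ((g'.support.toList.map ((fun p : MvPolynomial (Fin n) k × MvPolynomial (Fin n) k => p.1 * p.2) ∘
        fun b => (MvPolynomial.monomial b (-(e * g'.coeff b)), f)))).sum
        = -(MvPolynomial.C e * g' * f) := by
      have : ∀ b, (MvPolynomial.monomial b (-(e * g'.coeff b)) : MvPolynomial (Fin n) k) * f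
          = -(MvPolynomial.C e * (MvPolynomial.monomial b (g'.coeff b) * f)) := by
        intro b
        rw [map_neg, neg_mul, ← mul_assoc, MvPolynomial.C_mul_monomial]
      simp only [Function.comp_def, this]
      rw [Finset.sum_map_toList, Finset.sum_neg_distrib, ← Finset.mul_sum,
        ← Finset.sum_mul, MvPolynomial.support_sum_monomial_coeff, mul_assoc]
    rw [hA, hB]
    have hmf : (MvPolynomial.monomial (lm g) (1 / cf) : MvPolynomial (Fin n) k)
        = MvPolynomial.C e * MvPolynomial.monomial (lm g) cg := by
      rw [MvPolynomial.C_mul_monomial, hedef]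
      congr 1
      field_simp
    have hmg : (MvPolynomial.monomial (lm f) (1 / cg) : MvPolynomial (Fin n) k)
        = MvPolynomial.C e * MvPolynomial.monomial (lm f) cf := by
      rw [MvPolynomial.C_mul_monomial, hedef]
      congr 1
      field_simp
    rw [hmf, hmg]
    have hf1 : (MvPolynomial.monomial (lm f) cf : MvPolynomial (Fin n) k) = f - f' := by
      rw [hf'def]; ring
    have hg1 : (MvPolynomial.monomial (lm g) cg : MvPolynomial (Fin n) k) = g - g' := by
      rw [hg'def]; ring
    rw [hf1, hg1]
    ring
  · intro i hi
    exact (hmem _ (List.getD_eq_getElem L (0,0) hi ▸ List.getElem_mem hi)).2.2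
end

section
/- Uniqueness of reduced Gröbner Bases: any two reduced Gröbner Bases G and H for the same ideal J over a commutative polynomial ring (with respect to the same admissible monomial ordering) are equal. In particular, leading terms biject: for each g ∈ G there is a unique h ∈ H with LT(g) = LT(h), and then g = h. -/
open scoped MonomialOrder

/-- `p` reduces to zero modulo `G`:  `p = ∑ tᵢ·gᵢ` with each `tᵢ` a term, each
`gᵢ ∈ G`, and `LM(tᵢ·gᵢ) ≤ LM(p)` for all `i`. -/
def RedZero {k : Type*} [Field k] {n : ℕ} (m : MonomialOrder (Fin n))
    (lm : MvPolynomial (Fin n) k → (Fin n →₀ ℕ))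
    (G : Set (MvPolynomial (Fin n) k)) (p : MvPolynomial (Fin n) k) : Prop :=
  ∃ (N : ℕ) (t q : ℕ → MvPolynomial (Fin n) k),
    (∀ i, i < N → IsTerm (t i)) ∧
    (∀ i, i < N → q i ∈ G) ∧
    p = ∑ i ∈ Finset.range N, t i * q i ∧
    ∀ i, i < N → ∀ a ∈ (t i * q i).support, a ≼[m] lm p

/-- `G` is a Gröbner basis for the ideal `J`: a generating set of `J` such
that every element of `J` reduces to zero modulo `G`. -/
def IsGroebnerBasis {k : Type*} [Field k] {n : ℕ} (m : MonomialOrder (Fin n))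
    (lm : MvPolynomial (Fin n) k → (Fin n →₀ ℕ))
    (J : Ideal (MvPolynomial (Fin n) k)) (G : Set (MvPolynomial (Fin n) k)) : Prop :=
  Ideal.span G = J ∧ ∀ p ∈ J, RedZero m lm G p

/-- `G` is reduced: `G` consists of nonzero monic polynomials
(`LC g = 1` for all `g ∈ G`), and no term of any `g ∈ G` is divisible by the
leading term `LT g'` of any other `g' ∈ G`. -/
def IsReduced' {k : Type*} [Field k] {n : ℕ}
    (lm : MvPolynomial (Fin n) k → (Fin n →₀ ℕ))
    (G : Set (MvPolynomial (Fin n) k)) : Prop :=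
  (0 : MvPolynomial (Fin n) k) ∉ G ∧
  (∀ g ∈ G, MvPolynomial.coeff (lm g) g = 1) ∧
  (∀ g ∈ G, ∀ g' ∈ G, g' ≠ g → ∀ a ∈ g.support, ¬ lm g' ≤ a)

open MvPolynomial in
/-- Key lemma: if `G` is a reduced Gröbner basis for `J` and `p ∈ J` is nonzero,
then `lm g` divides `lm p` for some `g ∈ G`. -/
lemma exists_lm_le {k : Type*} [Field k] {n : ℕ}
    (m : MonomialOrder (Fin n))
    (lm : MvPolynomial (Fin n) k → (Fin n →₀ ℕ))
    (hlm : ∀ p : MvPolynomial (Fin n) k, p ≠ 0 →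
      lm p ∈ p.support ∧ ∀ a ∈ p.support, a ≼[m] lm p)
    (J : Ideal (MvPolynomial (Fin n) k))
    (G : Set (MvPolynomial (Fin n) k))
    (hG : IsGroebnerBasis m lm J G) (hGred : IsReduced' lm G)
    (p : MvPolynomial (Fin n) k) (hp : p ∈ J) (hp0 : p ≠ 0) :
    ∃ g ∈ G, lm g ≤ lm p := by
  obtain ⟨N, t, q, ht, hq, hsum, hbd⟩ := hG.2 p hp
  have hc : MvPolynomial.coeff (lm p) p ≠ 0 :=
    MvPolynomial.mem_support_iff.mp (hlm p hp0).1
  have hex : ∃ i ∈ Finset.range N, MvPolynomial.coeff (lm p) (t i * q i) ≠ 0 := by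
    by_contra hcon
    push_neg at hcon
    apply hc
    nth_rewrite 2 [hsum]
    rw [MvPolynomial.coeff_sum]
    exact Finset.sum_eq_zero hcon
  obtain ⟨i, hiN, hne⟩ := hex
  rw [Finset.mem_range] at hiN
  obtain ⟨a, c, hti⟩ := ht i hiN
  have hqG := hq i hiN
  have hq0 : q i ≠ 0 := fun h0 => hGred.1 (h0 ▸ hqG)
  have hmem : lm p ∈ (t i * q i).support := MvPolynomial.mem_support_iff.mpr hne
  classical
  have hmem' := MvPolynomial.support_mul (t i) (q i) hmem
  rw [Finset.mem_add] at hmem'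
  obtain ⟨a', ha', b, hb, hab⟩ := hmem'
  rw [hti, MvPolynomial.support_monomial] at ha'
  have hc0 : c ≠ 0 := by
    intro h0
    rw [h0, if_pos rfl] at ha'
    exact absurd ha' (Finset.notMem_empty _)
  rw [if_neg hc0, Finset.mem_singleton] at ha'
  subst ha'
  have hbq : m.toSyn b ≤ m.toSyn (lm (q i)) := (hlm _ hq0).2 b hb
  have hcoef : MvPolynomial.coeff (a' + lm (q i)) (t i * q i) = c := by
    rw [hti, MvPolynomial.coeff_monomial_mul, hGred.2.1 _ hqG, mul_one]
  have h1 : a' + lm (q i) ≼[m] lm p :=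
    hbd i hiN _ (MvPolynomial.mem_support_iff.mpr (hcoef ▸ hc0))
  rw [← hab, map_add, map_add, add_le_add_iff_left] at h1
  have hbeq : b = lm (q i) := m.toSyn.injective (le_antisymm hbq h1)
  refine ⟨q i, hqG, ?_⟩
  rw [← hab, hbeq]
  exact le_add_self

/-- Containment between two reduced Gröbner bases of the same ideal. -/
lemma subset_of_reduced {k : Type*} [Field k] {n : ℕ}
    (m : MonomialOrder (Fin n))
    (lm : MvPolynomial (Fin n) k → (Fin n →₀ ℕ))
    (hlm : ∀ p : MvPolynomial (Fin n) k, p ≠ 0 →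
      lm p ∈ p.support ∧ ∀ a ∈ p.support, a ≼[m] lm p)
    (J : Ideal (MvPolynomial (Fin n) k))
    (G H : Set (MvPolynomial (Fin n) k))
    (hG : IsGroebnerBasis m lm J G) (hH : IsGroebnerBasis m lm J H)
    (hGred : IsReduced' lm G) (hHred : IsReduced' lm H) :
    G ⊆ H := by
  intro g hg
  have hgJ : g ∈ J := hG.1 ▸ Ideal.subset_span hg
  have hg0 : g ≠ 0 := fun h0 => hGred.1 (h0 ▸ hg)
  obtain ⟨h, hhH, hle⟩ := exists_lm_le m lm hlm J H hH hHred g hgJ hg0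
  have hhJ : h ∈ J := hH.1 ▸ Ideal.subset_span hhH
  have hh0 : h ≠ 0 := fun h0 => hHred.1 (h0 ▸ hhH)
  obtain ⟨g', hg'G, hle'⟩ := exists_lm_le m lm hlm J G hG hGred h hhJ hh0
  have hgg' : g' = g := by
    by_contra hne
    exact hGred.2.2 g hg g' hg'G hne (lm g) (hlm g hg0).1 (hle'.trans hle)
  have hlmeq : lm h = lm g := le_antisymm hle (hgg' ▸ hle')
  suffices hgh : g = h by rwa [hgh]
  by_contra hne
  set p := g - h with hp
  have hp0 : p ≠ 0 := sub_ne_zero.mpr hne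
  have hpJ : p ∈ J := J.sub_mem hgJ hhJ
  have hlmp : lm p ∈ p.support := (hlm p hp0).1
  have hcoefp : MvPolynomial.coeff (lm p) p ≠ 0 := MvPolynomial.mem_support_iff.mp hlmp
  have hne_lm : lm p ≠ lm g := by
    intro heq
    apply hcoefp
    rw [hp, MvPolynomial.coeff_sub, heq, hGred.2.1 g hg, ← hlmeq, hHred.2.1 h hhH, sub_self]
  have hcase : lm p ∈ g.support ∨ lm p ∈ h.support := by
    by_contra hcon
    push_neg at hcon
    apply hcoefp
    rw [hp, MvPolynomial.coeff_sub,
      MvPolynomial.notMem_support_iff.mp hcon.1,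
      MvPolynomial.notMem_support_iff.mp hcon.2, sub_self]
  rcases hcase with hmg | hmh
  · obtain ⟨g₁, hg₁, hle₁⟩ := exists_lm_le m lm hlm J G hG hGred p hpJ hp0
    have hg₁g : g₁ = g := by
      by_contra hne₁
      exact hGred.2.2 g hg g₁ hg₁ hne₁ (lm p) hmg hle₁
    rw [hg₁g] at hle₁
    have h1 : lm g ≼[m] lm p := m.toSyn_monotone hle₁
    have h2 : lm p ≼[m] lm g := (hlm g hg0).2 _ hmg
    exact hne_lm (m.toSyn.injective (le_antisymm h2 h1))
  · obtain ⟨h₁, hh₁, hle₁⟩ := exists_lm_le m lm hlm J H hH hHred p hpJ hp0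
    have hh₁h : h₁ = h := by
      by_contra hne₁
      exact hHred.2.2 h hhH h₁ hh₁ hne₁ (lm p) hmh hle₁
    rw [hh₁h] at hle₁
    have h1 : lm h ≼[m] lm p := m.toSyn_monotone hle₁
    have h2 : lm p ≼[m] lm h := (hlm h hh0).2 _ hmh
    have : lm p = lm h := m.toSyn.injective (le_antisymm h2 h1)
    exact hne_lm (this.trans hlmeq)

/-- **Uniqueness of reduced Gröbner bases.**
Any two reduced Gröbner bases `G` and `H` for the same ideal `J` over
`k[x_1, …, x_n]`, with respect to the same admissible monomial ordering `m`
(with leading-monomial function `lm`), are equal. -/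
theorem reduced_groebner_basis_unique {k : Type*} [Field k] {n : ℕ}
    (m : MonomialOrder (Fin n))
    (lm : MvPolynomial (Fin n) k → (Fin n →₀ ℕ))
    (hlm : ∀ p : MvPolynomial (Fin n) k, p ≠ 0 →
      lm p ∈ p.support ∧ ∀ a ∈ p.support, a ≼[m] lm p)
    (J : Ideal (MvPolynomial (Fin n) k))
    (G H : Set (MvPolynomial (Fin n) k))
    (hG : IsGroebnerBasis m lm J G) (hH : IsGroebnerBasis m lm J H)
    (hGred : IsReduced' lm G) (hHred : IsReduced' lm H) :
    G = H :=
  Set.Subset.antisymm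
    (subset_of_reduced m lm hlm J G H hG hH hGred hHred)
    (subset_of_reduced m lm hlm J H G hH hG hHred hGred)
end

section
/- For an autoreduced set P with respect to a strong noncommutative involutive division, involutive remainders are additive: for any two polynomials f and g, Rem_I(f, P) + Rem_I(g, P) = Rem_I(f+g, P). -/
/-! Framework: noncommutative polynomials over the free associative algebra
`k⟨x_1, …, x_n⟩`, realised as the monoid algebra of the free monoid on
`Fin n`; admissible monomial orderings; noncommutative involutive divisions. -/

/-- Noncommutative monomials: words over the alphabet `x_1, …, x_n`. -/
abbrev NCWord (n : ℕ) : Type := FreeMonoid (Fin n)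

/-- Noncommutative polynomials: the free associative algebra `k⟨x_1, …, x_n⟩`. -/
abbrev NCPoly (k : Type) [Field k] (n : ℕ) : Type := MonoidAlgebra k (NCWord n)

/-- An admissible monomial ordering on noncommutative monomials: a total order
with `1` least and compatible with two-sided multiplication. -/
structure AdmOrder (n : ℕ) where
  le : NCWord n → NCWord n → Prop
  refl : ∀ a, le a a
  trans : ∀ {a b c}, le a b → le b c → le a c
  antisymm : ∀ {a b}, le a b → le b a → a = b
  total : ∀ a b, le a b ∨ le b a
  one_le : ∀ a, le 1 a
  mul_le_mul : ∀ {a b} (l r : NCWord n), le a b → le (l * a * r) (l * b * r)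

/-- A noncommutative involutive division: an assignment, to each monomial `u`
relative to a set `U` of monomials, of sets of left multiplicative and right
multiplicative variables. -/
structure InvDivision (n : ℕ) where
  Lmult : Set (NCWord n) → NCWord n → Set (Fin n)
  Rmult : Set (NCWord n) → NCWord n → Set (Fin n)

/-- The factorisation `w = l·u·r` witnesses involutive divisibility of `w` by
`u` (relative to `U`): the last letter of `l` (if any) is left multiplicative,
and the first letter of `r` (if any) is right multiplicative, for `u`. -/
def OkWitness {n : ℕ} (I : InvDivision n) (U : Set (NCWord n))
    (u l r : NCWord n) : Prop :=
  (∀ x : Fin n, (FreeMonoid.toList l).getLast? = some x → x ∈ I.Lmult U u) ∧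
  (∀ x : Fin n, (FreeMonoid.toList r).head? = some x → x ∈ I.Rmult U u)

/-- `u` involutively divides `w` relative to `U`: `w = l·u·r` for some
monomials `l, r` such that the adjoining letters are multiplicative for `u`. -/
def InvDiv {n : ℕ} (I : InvDivision n) (U : Set (NCWord n))
    (u w : NCWord n) : Prop :=
  ∃ l r : NCWord n, w = l * u * r ∧ OkWitness I U u l r

/-- The involutive cone of `u` relative to `U`. -/
def InvCone {n : ℕ} (I : InvDivision n) (U : Set (NCWord n))
    (u : NCWord n) : Set (NCWord n) :=
  {w : NCWord n | InvDiv I U u w}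

/-- `I` is a strong involutive division: involutive cones of elements of any
set `U` are nested or disjoint; any monomial is involutively divisible by a
given `u ∈ U` in at most one way; and multiplicative variables only grow when
passing to subsets. -/
def StrongDiv {n : ℕ} (I : InvDivision n) : Prop :=
  (∀ U : Set (NCWord n), ∀ u₁ ∈ U, ∀ u₂ ∈ U,
    (InvCone I U u₁ ∩ InvCone I U u₂).Nonempty →
      InvCone I U u₁ ⊆ InvCone I U u₂ ∨ InvCone I U u₂ ⊆ InvCone I U u₁) ∧
  (∀ U : Set (NCWord n), ∀ u ∈ U, ∀ w l₁ r₁ l₂ r₂ : NCWord n,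
    w = l₁ * u * r₁ → OkWitness I U u l₁ r₁ →
    w = l₂ * u * r₂ → OkWitness I U u l₂ r₂ → l₁ = l₂ ∧ r₁ = r₂) ∧
  (∀ U V : Set (NCWord n), V ⊆ U → ∀ v ∈ V,
    I.Lmult U v ⊆ I.Lmult V v ∧ I.Rmult U v ⊆ I.Rmult V v)

variable {k : Type} [Field k] {n : ℕ}

/-- One step of involutive reduction of `f` by the set `P` (with leading
monomials computed by `lm`, multiplicative variables taken over `LM(P)`):
some term of `f`, with monomial `w = l·LM(p)·r` involutively divisible by
`LM(p)` for some `p ∈ P`, is cancelled by subtracting the appropriate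
multiple `(c/LC(p))·l·p·r`. -/
def IStep {n : ℕ} (I : InvDivision n)
    (lm : NCPoly k n → NCWord n) (P : Finset (NCPoly k n))
    (f g : NCPoly k n) : Prop :=
  ∃ p ∈ P, ∃ w ∈ f.coeff.support, ∃ l r : NCWord n,
    w = l * lm p * r ∧ OkWitness I (lm '' (↑P : Set (NCPoly k n))) (lm p) l r ∧
    g = f - (f.coeff w / p.coeff (lm p)) •
      (MonoidAlgebra.single l (1 : k) * p * MonoidAlgebra.single r (1 : k))

/-- `r` is an involutive normal form (involutive remainder) of `f` modulo `P`:
`r` is obtained from `f` by a finite chain of involutive reductions and is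
itself involutively irreducible. -/
def INormalForm {n : ℕ} (I : InvDivision n)
    (lm : NCPoly k n → NCWord n) (P : Finset (NCPoly k n))
    (f r : NCPoly k n) : Prop :=
  Relation.ReflTransGen (IStep I lm P) f r ∧ ∀ g, ¬ IStep I lm P r g

/-- `P` is autoreduced: no polynomial of `P` contains a term which is
involutively divisible (with respect to `P`) by the leading monomial of
another element of `P`. -/
def Autoreduced {n : ℕ} (I : InvDivision n)
    (lm : NCPoly k n → NCWord n) (P : Finset (NCPoly k n)) : Prop :=
  ∀ p ∈ P, ∀ q ∈ P, q ≠ p → ∀ w ∈ p.coeff.support,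
    ¬ InvDiv I (lm '' (↑P : Set (NCPoly k n))) (lm q) w


section AuxProofs

variable {k : Type} [Field k] {n : ℕ}

lemma NC.phi_injective (l r : NCWord n) :
    Function.Injective (fun a : NCWord n => l * a * r) := by
  intro a b hab
  simp only at hab
  have h1 : l * (a * r) = l * (b * r) := by rw [← mul_assoc, ← mul_assoc, hab]
  exact mul_right_cancel (mul_left_cancel h1)

lemma NC.gen_eq_mapDomain (l r : NCWord n) (p : NCPoly k n) :
    (MonoidAlgebra.single l (1:k) * p * MonoidAlgebra.single r (1:k)).coeff
      = Finsupp.mapDomain (fun a => l * a * r) p.coeff := by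
  induction p using MonoidAlgebra.induction_linear with
  | zero => simp
  | add f g hf hg => rw [mul_add, add_mul, MonoidAlgebra.coeff_add, hf, hg,
      MonoidAlgebra.coeff_add, Finsupp.mapDomain_add]
  | single a b =>
      rw [MonoidAlgebra.single_mul_single, MonoidAlgebra.single_mul_single,
        MonoidAlgebra.coeff_single, MonoidAlgebra.coeff_single,
        Finsupp.mapDomain_single]
      simp [mul_assoc]

lemma NC.invdiv_self {n : ℕ} (I : InvDivision n) (U : Set (NCWord n)) (u : NCWord n) :
    InvDiv I U u u :=
  ⟨1, 1, by simp, by constructor <;> intro x hx <;> simp [FreeMonoid.toList_one] at hx⟩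

lemma NC.exists_max {n : ℕ} (O : AdmOrder n) {α : Type*} [DecidableEq α] (s : Finset α)
    (hs : s.Nonempty) (t : α → NCWord n) :
    ∃ a ∈ s, ∀ b ∈ s, O.le (t b) (t a) := by
  classical
  induction s using Finset.induction_on with
  | empty => exact absurd hs (by simp)
  | @insert x s hx ih =>
    rcases s.eq_empty_or_nonempty with rfl | hs'
    · refine ⟨x, Finset.mem_insert_self _ _, ?_⟩
      intro b hb
      simp only [Finset.mem_insert, Finset.notMem_empty, or_false] at hb
      subst hb; exact O.refl _
    · obtain ⟨a, ha, hmax⟩ := ih hs'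
      rcases O.total (t a) (t x) with hle | hle
      · refine ⟨x, Finset.mem_insert_self _ _, ?_⟩
        intro b hb
        rcases Finset.mem_insert.1 hb with rfl | hb
        · exact O.refl _
        · exact O.trans (hmax b hb) hle
      · refine ⟨a, Finset.mem_insert_of_mem ha, ?_⟩
        intro b hb
        rcases Finset.mem_insert.1 hb with rfl | hb
        · exact hle
        · exact hmax b hb

/-- The set of involutive multiples of elements of `P`. -/
def NC.GenSet (I : InvDivision n) (lm : NCPoly k n → NCWord n)
    (P : Finset (NCPoly k n)) : Set (NCPoly k n) :=
  {q | ∃ p ∈ P, ∃ l r : NCWord n,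
      OkWitness I (lm '' (↑P : Set (NCPoly k n))) (lm p) l r ∧
      q = MonoidAlgebra.single l (1:k) * p * MonoidAlgebra.single r (1:k)}

lemma NC.triple_unique (I : InvDivision n) (hI : StrongDiv I)
    (lm : NCPoly k n → NCWord n) (P : Finset (NCPoly k n))
    (hlmsupp : ∀ p ∈ P, lm p ∈ p.coeff.support)
    (hauto : Autoreduced I lm P)
    {p p' : NCPoly k n} (hp : p ∈ P) (hp' : p' ∈ P)
    {l r l' r' : NCWord n}
    (ok : OkWitness I (lm '' (↑P : Set (NCPoly k n))) (lm p) l r)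
    (ok' : OkWitness I (lm '' (↑P : Set (NCPoly k n))) (lm p') l' r')
    (heq : l * lm p * r = l' * lm p' * r') :
    p = p' ∧ l = l' ∧ r = r' := by
  set U := lm '' (↑P : Set (NCPoly k n)) with hU
  have hpp' : p = p' := by
    by_contra hne
    have hW1 : (l * lm p * r) ∈ InvCone I U (lm p) := ⟨l, r, rfl, ok⟩
    have hW2 : (l * lm p * r) ∈ InvCone I U (lm p') := by
      rw [heq]; exact ⟨l', r', rfl, ok'⟩
    rcases hI.1 U (lm p) ⟨p, hp, rfl⟩ (lm p') ⟨p', hp', rfl⟩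
        ⟨_, hW1, hW2⟩ with hsub | hsub
    · exact hauto p hp p' hp' (Ne.symm hne) (lm p) (hlmsupp p hp)
        (hsub (NC.invdiv_self I U (lm p)))
    · exact hauto p' hp' p hp hne (lm p') (hlmsupp p' hp')
        (hsub (NC.invdiv_self I U (lm p')))
  subst hpp'
  have := hI.2.1 U (lm p) ⟨p, hp, rfl⟩ (l * lm p * r) l r l' r' rfl ok heq ok'
  exact ⟨rfl, this.1, this.2⟩

lemma NC.key_reducible (O : AdmOrder n) (I : InvDivision n) (hI : StrongDiv I)
    (lm : NCPoly k n → NCWord n)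
    (hlm : ∀ p : NCPoly k n, p ≠ 0 →
      lm p ∈ p.coeff.support ∧ ∀ a ∈ p.coeff.support, O.le a (lm p))
    (P : Finset (NCPoly k n)) (hP0 : (0 : NCPoly k n) ∉ P)
    (hauto : Autoreduced I lm P)
    (h : NCPoly k n) (hmem : h ∈ Submodule.span k (NC.GenSet I lm P))
    (hne : h ≠ 0) :
    ∃ w ∈ h.coeff.support, ∃ p ∈ P, ∃ l r : NCWord n,
      w = l * lm p * r ∧ OkWitness I (lm '' (↑P : Set (NCPoly k n))) (lm p) l r := by
  classical
  set U := lm '' (↑P : Set (NCPoly k n)) with hU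
  have hP0' : ∀ p ∈ P, p ≠ 0 := fun p hp h0 => hP0 (h0 ▸ hp)
  have hlmsupp : ∀ p ∈ P, lm p ∈ p.coeff.support := fun p hp => (hlm p (hP0' p hp)).1
  rw [Submodule.mem_span_set] at hmem
  obtain ⟨c, hc, hsum⟩ := hmem
  have hcsupp : c.support.Nonempty := by
    rcases Finset.eq_empty_or_nonempty c.support with he | hne'
    · exfalso; apply hne
      rw [← hsum, Finsupp.sum, he, Finset.sum_empty]
    · exact hne'
  have spec : ∀ q ∈ c.support, ∃ p, p ∈ P ∧ ∃ l, ∃ r,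
      OkWitness I U (lm p) l r ∧
      q = MonoidAlgebra.single l (1:k) * p * MonoidAlgebra.single r (1:k) := by
    intro q hq
    obtain ⟨p, hp, l, r, ok, hqe⟩ := hc hq
    exact ⟨p, hp, l, r, ok, hqe⟩
  choose fp hfp fl fr hok hgen using spec
  -- top monomial of each generator
  obtain ⟨⟨q0, hq0⟩, -, hmax⟩ := NC.exists_max O c.support.attach
    (Finset.attach_nonempty_iff.2 hcsupp)
    (fun z => fl z.1 z.2 * lm (fp z.1 z.2) * fr z.1 z.2)
  set W : NCWord n := fl q0 hq0 * lm (fp q0 hq0) * fr q0 hq0 with hW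
  have hmax' : ∀ q (hq : q ∈ c.support),
      O.le (fl q hq * lm (fp q hq) * fr q hq) W :=
    fun q hq => hmax ⟨q, hq⟩ (Finset.mem_attach _ _)
  -- coefficient of a generator at W
  have hcoeff : ∀ q (hq : q ∈ c.support), q ≠ q0 → q.coeff W = 0 := by
    intro q hq hne'
    by_contra hqW
    have hqmap : q.coeff = Finsupp.mapDomain (fun a => fl q hq * a * fr q hq) (fp q hq).coeff :=
      (congrArg MonoidAlgebra.coeff (hgen q hq)).trans (NC.gen_eq_mapDomain (fl q hq) (fr q hq) (fp q hq))
    have hWmem : W ∈ (Finsupp.mapDomain (fun a => fl q hq * a * fr q hq) (fp q hq).coeff).support := by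
      rw [← hqmap]; exact Finsupp.mem_support_iff.2 hqW
    have := Finsupp.mapDomain_support hWmem
    obtain ⟨a, ha, hae⟩ := Finset.mem_image.1 this
    have hle1 : O.le a (lm (fp q hq)) :=
      (hlm (fp q hq) (hP0' _ (hfp q hq))).2 a ha
    have hle2 : O.le W (fl q hq * lm (fp q hq) * fr q hq) := by
      rw [← hae]; exact O.mul_le_mul _ _ hle1
    have heqtop : fl q hq * lm (fp q hq) * fr q hq = W :=
      O.antisymm (hmax' q hq) hle2
    have := NC.triple_unique I hI lm P hlmsupp hauto (hfp q hq) (hfp q0 hq0)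
      (hok q hq) (hok q0 hq0) (heqtop.trans hW)
    apply hne'
    rw [hgen q hq, hgen q0 hq0, this.1, this.2.1, this.2.2]
  have hq0W : q0.coeff W = (fp q0 hq0).coeff (lm (fp q0 hq0)) := by
    have hqmap : q0.coeff = Finsupp.mapDomain (fun a => fl q0 hq0 * a * fr q0 hq0) (fp q0 hq0).coeff :=
      (congrArg MonoidAlgebra.coeff (hgen q0 hq0)).trans (NC.gen_eq_mapDomain (fl q0 hq0) (fr q0 hq0) (fp q0 hq0))
    have h2 := Finsupp.mapDomain_apply (NC.phi_injective (fl q0 hq0) (fr q0 hq0))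
      (fp q0 hq0).coeff (lm (fp q0 hq0))
    rw [← hqmap] at h2
    exact h2
  have hhW : h.coeff W = c q0 * q0.coeff W := by
    rw [← hsum, Finsupp.sum, MonoidAlgebra.coeff_sum, Finsupp.finset_sum_apply]
    rw [Finset.sum_eq_single_of_mem q0 hq0]
    · rw [MonoidAlgebra.coeff_smul_apply, smul_eq_mul]
    · intro q hq hne'
      rw [MonoidAlgebra.coeff_smul_apply, hcoeff q hq hne', smul_zero]
  have hhWne : h.coeff W ≠ 0 := by
    rw [hhW, hq0W]
    exact mul_ne_zero (Finsupp.mem_support_iff.1 hq0)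
      (Finsupp.mem_support_iff.1 (hlmsupp _ (hfp q0 hq0)))
  exact ⟨W, Finsupp.mem_support_iff.2 hhWne, fp q0 hq0, hfp q0 hq0,
    fl q0 hq0, fr q0 hq0, hW, hok q0 hq0⟩

lemma NC.istep_sub_mem (I : InvDivision n) (lm : NCPoly k n → NCWord n)
    (P : Finset (NCPoly k n)) {a b : NCPoly k n} (hst : IStep I lm P a b) :
    a - b ∈ Submodule.span k (NC.GenSet I lm P) := by
  obtain ⟨p, hp, w, hw, l, r, heq, hok, rfl⟩ := hst
  rw [sub_sub_cancel]
  exact Submodule.smul_mem _ _ (Submodule.subset_span ⟨p, hp, l, r, hok, rfl⟩)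

lemma NC.chain_sub_mem (I : InvDivision n) (lm : NCPoly k n → NCWord n)
    (P : Finset (NCPoly k n)) {a b : NCPoly k n}
    (hrel : Relation.ReflTransGen (IStep I lm P) a b) :
    a - b ∈ Submodule.span k (NC.GenSet I lm P) := by
  induction hrel with
  | refl => simp only [sub_self]; exact Submodule.zero_mem _
  | @tail x y hxy hstep ih =>
      have h1 := NC.istep_sub_mem I lm P hstep
      have : a - y = (a - x) + (x - y) := by abel
      rw [this]
      exact Submodule.add_mem _ ih h1

end AuxProofs

/-- **Additivity of involutive remainders for strong divisions.**
Let `P` be a set of nonzero noncommutative polynomials, autoreduced with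
respect to a strong involutive division `I` (leading monomials `lm` taken
with respect to an admissible monomial ordering `O`).  Then for any two
polynomials `f` and `g`, `Rem_I(f, P) + Rem_I(g, P) = Rem_I(f + g, P)`:
any involutive normal forms of `f`, of `g`, and of `f + g` satisfy
`rf + rg = rfg`. -/
theorem involutive_remainder_add {k : Type} [Field k] {n : ℕ}
    (O : AdmOrder n) (I : InvDivision n) (hI : StrongDiv I)
    (lm : NCPoly k n → NCWord n)
    (hlm : ∀ p : NCPoly k n, p ≠ 0 →
      lm p ∈ p.coeff.support ∧ ∀ a ∈ p.coeff.support, O.le a (lm p))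
    (P : Finset (NCPoly k n)) (hP0 : (0 : NCPoly k n) ∉ P)
    (hauto : Autoreduced I lm P)
    (f g rf rg rfg : NCPoly k n)
    (hf : INormalForm I lm P f rf)
    (hg : INormalForm I lm P g rg)
    (hfg : INormalForm I lm P (f + g) rfg) :
    rf + rg = rfg := by
  classical
  set U := lm '' ((P : Set (NCPoly k n))) with hU
  have hm : rfg - (rf + rg) ∈ Submodule.span k (NC.GenSet I lm P) := by
    have h1 := NC.chain_sub_mem I lm P hf.1
    have h2 := NC.chain_sub_mem I lm P hg.1
    have h3 := NC.chain_sub_mem I lm P hfg.1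
    have : rfg - (rf + rg) = (f - rf) + (g - rg) - ((f + g) - rfg) := by abel
    rw [this]
    exact Submodule.sub_mem _ (Submodule.add_mem _ h1 h2) h3
  by_contra hne
  have hne' : rfg - (rf + rg) ≠ 0 := fun h0 => hne ((sub_eq_zero.mp h0).symm)
  obtain ⟨w, hwmem, p, hp, l, r, hweq, hok⟩ :=
    NC.key_reducible O I hI lm hlm P hP0 hauto _ hm hne'
  have hwne : rfg.coeff w - (rf.coeff w + rg.coeff w) ≠ 0 := by
    have := Finsupp.mem_support_iff.1 hwmem
    simpa using this
  have hcase : rf.coeff w ≠ 0 ∨ rg.coeff w ≠ 0 ∨ rfg.coeff w ≠ 0 := by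
    by_contra hc
    push_neg at hc
    rw [hc.1, hc.2.1, hc.2.2] at hwne
    simp at hwne
  rcases hcase with h0 | h0 | h0
  · exact hf.2 _ ⟨p, hp, w, Finsupp.mem_support_iff.2 h0, l, r, hweq, hok, rfl⟩
  · exact hg.2 _ ⟨p, hp, w, Finsupp.mem_support_iff.2 h0, l, r, hweq, hok, rfl⟩
  · exact hfg.2 _ ⟨p, hp, w, Finsupp.mem_support_iff.2 h0, l, r, hweq, hok, rfl⟩
end
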